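/- arXiv:1805.04599 — 4 statements merged into one kernel-verified Lean document; each statement's English description precedes it below -/
import Mathlib

section
/- For any natural number n ≥ 1 of the form n = 3ℓ² + 3ℓ + 1 + k with ℓ ≥ 1 an integer and 0 ≤ k < 6ℓ + 6, one has 6ℓ + ⌈k/(ℓ+1)⌉ ≤ 2√3·√n. In particular, a hexagonal configuration of n particles on the triangular lattice has perimeter at most 2√3·√n. -/
/-- Hexagonal configurations of `n = 3ℓ² + 3ℓ + 1 + k` particles (with one
partial outer layer of `k` particles) have perimeter
`6ℓ + ⌈k/(ℓ+1)⌉ ≤ 2√3·√n`. -/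
theorem stmt_0 (ℓ k n : ℕ) (hℓ : 1 ≤ ℓ) (hn1 : 1 ≤ n)
    (hk : k < 6 * ℓ + 6) (hn : n = 3 * ℓ ^ 2 + 3 * ℓ + 1 + k) :
    (6 * ℓ : ℝ) + (⌈(k : ℝ) / ((ℓ : ℝ) + 1)⌉ : ℝ) ≤
      2 * Real.sqrt 3 * Real.sqrt n := by
  set c : ℤ := ⌈(k : ℝ) / ((ℓ : ℝ) + 1)⌉ with hcdef
  have hℓ0 : (0:ℝ) < (ℓ:ℝ) + 1 := by positivity
  have hc0 : 0 ≤ c := Int.ceil_nonneg (by positivity)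
  have hkR : (k:ℝ) < 6*ℓ+6 := by exact_mod_cast hk
  have hc6 : c ≤ 6 := by
    rw [hcdef]
    apply Int.ceil_le.mpr
    rw [div_le_iff₀ hℓ0]
    push_cast
    linarith
  have hceil : ((c:ℝ)) < (k:ℝ) / ((ℓ:ℝ)+1) + 1 := by
    rw [hcdef]; exact Int.ceil_lt_add_one _
  have hkc : ((c:ℝ) - 1) * ((ℓ:ℝ)+1) < k := by
    rw [← lt_div_iff₀ hℓ0]; linarith
  have hZ : (c - 1) * ((ℓ:ℤ)+1) < (k:ℤ) := by exact_mod_cast hkc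
  have hℓZ : (1:ℤ) ≤ (ℓ:ℤ) := by exact_mod_cast hℓ
  have key : ((6*(ℓ:ℤ) + c)^2 : ℤ) ≤ 12 * (3 * (ℓ:ℤ)^2 + 3*ℓ + 1 + k) := by
    nlinarith [hc0, hc6, hZ, hℓZ]
  have keyR : ((6*(ℓ:ℝ) + (c:ℝ))^2) ≤ 12 * n := by
    have : ((6*(ℓ:ℝ) + (c:ℝ))^2) ≤ 12 * (3 * (ℓ:ℝ)^2 + 3*ℓ + 1 + k) := by
      exact_mod_cast key
    rw [hn]; push_cast; linarith
  have hnonneg : (0:ℝ) ≤ 6*(ℓ:ℝ) + (c:ℝ) := by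
    have : (0:ℝ) ≤ (c:ℝ) := by exact_mod_cast hc0
    positivity
  have hle : (6*(ℓ:ℝ) + (c:ℝ)) ≤ Real.sqrt (12 * n) := by
    calc (6*(ℓ:ℝ) + (c:ℝ)) = Real.sqrt ((6*(ℓ:ℝ) + (c:ℝ))^2) := by
          rw [Real.sqrt_sq hnonneg]
      _ ≤ Real.sqrt (12 * n) := Real.sqrt_le_sqrt keyR
  have h12 : Real.sqrt (12 * n) = 2 * Real.sqrt 3 * Real.sqrt n := by
    rw [Real.sqrt_mul (by norm_num), show (12:ℝ) = 2^2 * 3 by norm_num,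
      Real.sqrt_mul (by positivity), Real.sqrt_sq (by norm_num)]
  rw [h12] at hle
  linarith
end

section
/- For every integer ℓ ≥ 1 and every i with 1 ≤ i ≤ 6, and every integer k with (i−1)·ℓ + (i−2) < k, one has (6ℓ + i)² ≤ 12·(3ℓ² + 3ℓ + 1 + k). -/
/-- Core arithmetic inequality for `p_min(n) ≤ 2√3·√n`: a hexagon of side `ℓ`
with `k` additional particles has perimeter `6ℓ + i` and
`n = 3ℓ² + 3ℓ + 1 + k` particles, with `(6ℓ + i)² ≤ 12n`. -/
theorem stmt_1 (ℓ i k : ℤ) (hℓ : 1 ≤ ℓ) (hi1 : 1 ≤ i) (hi6 : i ≤ 6)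
    (hk : (i - 1) * ℓ + (i - 2) < k) :
    (6 * ℓ + i) ^ 2 ≤ 12 * (3 * ℓ ^ 2 + 3 * ℓ + 1 + k) := by
  nlinarith [sq_nonneg i, mul_le_mul_of_nonneg_left hi6 (by linarith : (0:ℤ) ≤ i)]
end

section
/- Let N be a positive even integer, 0 < δ' < ε < 1/2 with δ'·N and ε·N integers, and let k ≤ δ'·N. Then the ratio of binomial coefficients satisfies C(N, k) / C(N, N/2) ≤ (ε/(1−ε))^{(ε − δ')·N}. -/
lemma aux_choose_mono_half (n : ℕ) : ∀ j, j ≤ n / 2 → ∀ i ≤ j, n.choose i ≤ n.choose j := by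
  intro j
  induction j with
  | zero => intro _ i hi; simp [Nat.le_zero.mp hi]
  | succ j ih =>
    intro hj i hi
    rcases Nat.eq_or_lt_of_le hi with h | h
    · rw [h]
    · exact le_trans (ih (by omega) i (by omega))
        (Nat.choose_le_succ_of_lt_half_left (by omega))

lemma aux_chain (N a b : ℕ) (r : ℝ) (hr : 0 ≤ r) (hbN : b ≤ N)
    (hfac : ∀ i, a ≤ i → i < b → ((i : ℝ) + 1) ≤ r * ((N : ℝ) - i)) :
    ∀ j, a + j ≤ b → (N.choose a : ℝ) ≤ r ^ j * N.choose (a + j) := by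
  intro j
  induction j with
  | zero => intro _; simp
  | succ j ih =>
    intro hj
    have hij : a + j < b := by omega
    have h1 := ih (by omega)
    set i := a + j with hi
    have hiN : i < N := by omega
    have hkey : (N.choose (i + 1) : ℝ) * ((i : ℝ) + 1) = (N.choose i : ℝ) * ((N : ℝ) - i) := by
      have := Nat.choose_succ_right_eq N i
      have hcast : ((N.choose (i+1) * (i+1) : ℕ) : ℝ) = ((N.choose i * (N - i) : ℕ) : ℝ) := by
        exact_mod_cast congrArg Nat.cast this
      push_cast [Nat.cast_sub hiN.le] at hcast
      linarith [hcast]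
    have hpos : (0 : ℝ) < (N : ℝ) - i := by
      have : (i : ℝ) < N := by exact_mod_cast hiN
      linarith
    have hstep : (N.choose i : ℝ) ≤ r * N.choose (i + 1) := by
      have hf := hfac i (by omega) hij
      have : (N.choose i : ℝ) * ((N : ℝ) - i) ≤ (r * N.choose (i + 1)) * ((N : ℝ) - i) := by
        rw [← hkey]
        calc (N.choose (i+1) : ℝ) * ((i : ℝ) + 1) ≤ (N.choose (i+1) : ℝ) * (r * ((N:ℝ) - i)) :=
              mul_le_mul_of_nonneg_left hf (by positivity)
          _ = (r * N.choose (i + 1)) * ((N : ℝ) - i) := by ring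
      exact le_of_mul_le_mul_right this hpos
    calc (N.choose a : ℝ) ≤ r ^ j * N.choose i := h1
      _ ≤ r ^ j * (r * N.choose (i + 1)) :=
          mul_le_mul_of_nonneg_left hstep (by positivity)
      _ = r ^ (j + 1) * N.choose (a + (j + 1)) := by
          rw [show a + (j+1) = i + 1 by omega]; ring

/-- Binomial-ratio estimate: for even `N > 0`, `0 < δ' < ε < 1/2` with `δ'N`
and `εN` integers, and `k ≤ δ'N`, one has
`C(N,k)/C(N,N/2) ≤ (ε/(1−ε))^{(ε−δ')N}`. -/
theorem stmt_11 (N : ℕ) (hN : 0 < N) (hNe : Even N) (δ' ε : ℝ)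
    (h1 : 0 < δ') (h2 : δ' < ε) (h3 : ε < 1 / 2)
    (hδN : ∃ m : ℕ, (m : ℝ) = δ' * N) (hεN : ∃ m : ℕ, (m : ℝ) = ε * N)
    (k : ℕ) (hk : (k : ℝ) ≤ δ' * N) :
    (N.choose k : ℝ) / (N.choose (N / 2)) ≤
      (ε / (1 - ε)) ^ ((ε - δ') * N) := by
  obtain ⟨a, ha⟩ := hδN
  obtain ⟨b, hb⟩ := hεN
  have hε0 : 0 < ε := h1.trans h2
  have hε1 : 0 < 1 - ε := by linarith
  set r : ℝ := ε / (1 - ε) with hr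
  have hr0 : 0 < r := by positivity
  have hNR : (0 : ℝ) < N := by exact_mod_cast hN
  have hab : a < b := by
    have : (a : ℝ) < b := by rw [ha, hb]; exact mul_lt_mul_of_pos_right h2 hNR
    exact_mod_cast this
  -- N/2 facts
  obtain ⟨c, hc⟩ := hNe
  have hc2 : N / 2 = c := by omega
  have hcR : (c : ℝ) = (N : ℝ) / 2 := by
    have : (N : ℝ) = c + c := by exact_mod_cast hc
    linarith
  have hbc : b ≤ N / 2 := by
    rw [hc2]
    have : (b : ℝ) < c := by
      rw [hb, hcR]; nlinarith
    exact_mod_cast this.le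
  have hka : k ≤ a := by
    have : (k : ℝ) ≤ a := by rw [ha]; exact hk
    exact_mod_cast this
  have hmono : (N.choose k : ℝ) ≤ N.choose a :=
    Nat.cast_le.mpr (aux_choose_mono_half N a (by omega) k hka)
  have hfac : ∀ i, a ≤ i → i < b → ((i : ℝ) + 1) ≤ r * ((N : ℝ) - i) := by
    intro i _ hib
    have hi1 : (i : ℝ) + 1 ≤ b := by exact_mod_cast hib
    rw [hb] at hi1
    have hNi : (1 - ε) * N ≤ (N : ℝ) - i := by linarith
    calc ((i : ℝ) + 1) ≤ ε * N := hi1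
      _ ≤ r * ((N : ℝ) - i) := by
          rw [hr, div_mul_eq_mul_div, le_div_iff₀ hε1]; nlinarith
  have hchain := aux_chain N a b r hr0.le (by omega) hfac (b - a) (by omega)
  rw [show a + (b - a) = b by omega] at hchain
  have hmid : (N.choose b : ℝ) ≤ N.choose (N / 2) :=
    Nat.cast_le.mpr (Nat.choose_le_middle b N)
  have hexp : (ε - δ') * N = ((b - a : ℕ) : ℝ) := by
    have : ((b - a : ℕ) : ℝ) = (b : ℝ) - a := by
      push_cast [Nat.cast_sub hab.le]; ring
    rw [this, hb, ha]; ring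
  rw [hexp, Real.rpow_natCast]
  have hpos : (0 : ℝ) < N.choose (N / 2) := by
    exact_mod_cast Nat.choose_pos (Nat.div_le_self N 2)
  rw [div_le_iff₀ hpos]
  calc (N.choose k : ℝ) ≤ N.choose a := hmono
    _ ≤ r ^ (b - a) * N.choose b := hchain
    _ ≤ r ^ (b - a) * N.choose (N / 2) := mul_le_mul_of_nonneg_left hmid (by positivity)
end

section
/- Let Λ be a finite set of vertices of a graph with maximum degree 6, with |Λ| even, and for 0 ≤ ℓ ≤ |Λ| define Z_Λ^ℓ = ∑_σ γ^{−h(σ)} where the sum is over 2-colorings σ of Λ with exactly ℓ vertices of color c₂ and h(σ) counts bichromatic edges within Λ. Then for any ℓ, Z_Λ^ℓ / Z_Λ^{|Λ|/2} ≤ max{γ^{6(ℓ − |Λ|/2)}, γ^{−6(ℓ − |Λ|/2)}}. -/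
/-!
Identify a 2-colouring with its set of `c₂`-vertices. Recolouring one vertex changes the
number `h` of bichromatic edges by at most the maximal degree `d`, so for `B ⊆ A` with
`#A = ℓ`, `#B = m` we get `γ^{-h(A)} ≤ max(γ^{d(ℓ-m)}, γ^{-d(ℓ-m)}) γ^{-h(B)}`.
Sum this over all such pairs: each `A` contains `C(ℓ, m)` sets `B`, while each `B` lies in
at most `C(n - m, ℓ - m) ≤ C(ℓ, m)` sets `A` as soon as `n ≤ ℓ + m`; hence
`Z^ℓ ≤ max(γ^{d(ℓ-m)}, γ^{-d(ℓ-m)}) Z^m`. With `m = n/2` this settles `ℓ ≥ n/2`, and the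
colour swap `Z^ℓ = Z^{n-ℓ}` reduces `ℓ < n/2` to that case.
-/

open Finset

namespace SimpleGraph

variable {ι : Type*} [Fintype ι] (H : SimpleGraph ι) [DecidableRel H.Adj]

def bichromaticPairs {α : Type*} [DecidableEq α] (σ : ι → α) : Finset (ι × ι) :=
  univ.filter fun p => H.Adj p.1 p.2 ∧ σ p.1 ≠ σ p.2

-- Every edge appears twice among the ordered pairs.
def bichromaticEdgeCount {α : Type*} [DecidableEq α] (σ : ι → α) : ℕ :=
  #(H.bichromaticPairs σ) / 2

lemma bichromaticPairs_comp {α β : Type*} [DecidableEq α] [DecidableEq β] {e : α → β}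
    (he : Function.Injective e) (σ : ι → α) :
    H.bichromaticPairs (e ∘ σ) = H.bichromaticPairs σ := by
  ext p
  simp [bichromaticPairs, he.ne_iff]

variable [DecidableEq ι] {d : ℕ}

lemma card_adj_pairs_incident_le (hdeg : ∀ v, H.degree v ≤ d) (D : Finset ι) :
    #(univ.filter fun p : ι × ι => H.Adj p.1 p.2 ∧ (p.1 ∈ D ∨ p.2 ∈ D)) ≤ #D * (2 * d) := by
  refine (card_le_card ?_).trans <| card_biUnion_le_card_mul D
    (fun v => (H.neighborFinset v).image (v, ·) ∪ (H.neighborFinset v).image (·, v)) _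
    fun v _ => (card_union_le _ _).trans ?_
  · rintro ⟨u, w⟩ hp
    simp only [mem_filter, mem_univ, true_and] at hp
    obtain ⟨hadj, hu | hw⟩ := hp
    · exact mem_biUnion.2 ⟨u, hu, mem_union_left _ <|
        mem_image.2 ⟨w, by simpa using hadj, rfl⟩⟩
    · exact mem_biUnion.2 ⟨w, hw, mem_union_right _ <|
        mem_image.2 ⟨u, by simpa using hadj.symm, rfl⟩⟩
  · have h₁ := (card_image_le (s := H.neighborFinset v) (f := (v, ·))).trans (hdeg v)
    have h₂ := (card_image_le (s := H.neighborFinset v) (f := (·, v))).trans (hdeg v)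
    omega

lemma card_bichromaticPairs_le {α : Type*} [DecidableEq α] (hdeg : ∀ v, H.degree v ≤ d)
    (σ τ : ι → α) :
    #(H.bichromaticPairs σ) ≤
      #(H.bichromaticPairs τ) + #(univ.filter fun i => σ i ≠ τ i) * (2 * d) := by
  refine (card_le_card ?_).trans <| (card_union_le _ _).trans <|
    Nat.add_le_add_left (H.card_adj_pairs_incident_le hdeg _) _
  rintro ⟨u, w⟩ hp
  simp only [bichromaticPairs, mem_filter, mem_univ, true_and, mem_union] at hp ⊢
  by_cases hu : σ u = τ u
  · by_cases hw : σ w = τ w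
    · exact .inl ⟨hp.1, hu ▸ hw ▸ hp.2⟩
    · exact .inr ⟨hp.1, .inr hw⟩
  · exact .inr ⟨hp.1, .inl hu⟩

lemma bichromaticEdgeCount_le {α : Type*} [DecidableEq α] (hdeg : ∀ v, H.degree v ≤ d)
    (σ τ : ι → α) :
    H.bichromaticEdgeCount σ ≤
      H.bichromaticEdgeCount τ + #(univ.filter fun i => σ i ≠ τ i) * d := by
  have := H.card_bichromaticPairs_le hdeg σ τ
  rw [mul_left_comm] at this
  unfold bichromaticEdgeCount
  omega

end SimpleGraph

section DoubleCounting

variable {ι : Type*} [Fintype ι] [DecidableEq ι] {ℓ m : ℕ}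

lemma card_filter_superset_powersetCard_le (B : Finset ι) :
    #((powersetCard ℓ univ).filter (B ⊆ ·)) ≤ (Fintype.card ι - #B).choose (ℓ - #B) := by
  rw [← card_compl, ← card_powersetCard]
  refine card_le_card_of_injOn (· \ B) (fun A hA => ?_) fun A hA A' hA' hAA' => ?_
  · simp only [coe_filter, mem_powersetCard, subset_univ, true_and, Set.mem_ofPred_eq] at hA
    rw [mem_coe, mem_powersetCard, card_sdiff_of_subset hA.2, hA.1]
    exact ⟨fun i hi => mem_compl.2 (mem_sdiff.1 hi).2, rfl⟩
  · simp only [coe_filter, mem_powersetCard, subset_univ, true_and, Set.mem_ofPred_eq]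
      at hA hA'
    rw [← sdiff_union_of_subset hA.2, ← sdiff_union_of_subset hA'.2]
    exact congrArg (· ∪ B) hAA'

theorem sum_powersetCard_le_mul_sum_powersetCard {w : Finset ι → ℝ} {c : ℝ}
    (hw : ∀ B, 0 ≤ w B) (hc : 0 ≤ c) (hmℓ : m ≤ ℓ) (hℓ : Fintype.card ι ≤ ℓ + m)
    (hwc : ∀ A B, B ⊆ A → #A = ℓ → #B = m → w A ≤ c * w B) :
    ∑ A ∈ powersetCard ℓ univ, w A ≤ c * ∑ B ∈ powersetCard m univ, w B := by
  have hchoose : (Fintype.card ι - m).choose (ℓ - m) ≤ ℓ.choose m := by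
    rw [← Nat.choose_symm hmℓ]
    exact Nat.choose_le_choose _ (by omega)
  refine le_of_mul_le_mul_left ?_
    (Nat.cast_pos.2 (Nat.choose_pos hmℓ) : (0 : ℝ) < ℓ.choose m)
  calc (ℓ.choose m : ℝ) * ∑ A ∈ powersetCard ℓ univ, w A
      = ∑ A ∈ powersetCard ℓ univ, ∑ _B ∈ powersetCard m A, w A := by
        rw [mul_sum]
        refine sum_congr rfl fun A hA => ?_
        rw [sum_const, card_powersetCard, (mem_powersetCard.1 hA).2, nsmul_eq_mul]
    _ ≤ ∑ A ∈ powersetCard ℓ univ, ∑ B ∈ powersetCard m A, c * w B :=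
        sum_le_sum fun A hA => sum_le_sum fun B hB =>
          hwc A B (mem_powersetCard.1 hB).1 (mem_powersetCard.1 hA).2 (mem_powersetCard.1 hB).2
    _ = ∑ B ∈ powersetCard m univ, ∑ _A ∈ (powersetCard ℓ univ).filter (B ⊆ ·), c * w B :=
        sum_comm' fun A B => by simp only [mem_powersetCard, mem_filter, subset_univ]; tauto
    _ ≤ ∑ B ∈ powersetCard m univ, (ℓ.choose m : ℝ) * (c * w B) := by
        refine sum_le_sum fun B hB => ?_
        obtain ⟨-, rfl⟩ := mem_powersetCard.1 hB
        rw [sum_const, nsmul_eq_mul]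
        gcongr
        · exact mul_nonneg hc (hw B)
        · exact_mod_cast (card_filter_superset_powersetCard_le B).trans hchoose
    _ = ℓ.choose m * (c * ∑ B ∈ powersetCard m univ, w B) := by
        rw [mul_sum, mul_sum]

end DoubleCounting

section TwoColorings

variable {ι : Type*} [Fintype ι] [DecidableEq ι]

def twoColoring (A : Finset ι) : ι → Fin 2 := fun i => if i ∈ A then 1 else 0

lemma filter_twoColoring_eq_one (A : Finset ι) : univ.filter (twoColoring A · = 1) = A := by
  ext i
  by_cases hi : i ∈ A <;> simp [twoColoring, hi]

lemma twoColoring_filter_eq_one (σ : ι → Fin 2) :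
    twoColoring (univ.filter (σ · = 1)) = σ := by
  funext i
  simp only [twoColoring, mem_filter, mem_univ, true_and]
  split_ifs <;> omega

lemma twoColoring_compl (A : Finset ι) : twoColoring Aᶜ = Fin.rev ∘ twoColoring A := by
  funext i
  by_cases hi : i ∈ A <;> simp [twoColoring, hi]

lemma filter_twoColoring_ne (A B : Finset ι) :
    univ.filter (fun i => twoColoring A i ≠ twoColoring B i) = symmDiff A B := by
  ext i
  rw [mem_filter, mem_symmDiff]
  by_cases hA : i ∈ A <;> by_cases hB : i ∈ B <;> simp [twoColoring, hA, hB]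

lemma sum_filter_card_eq_one_eq_sum_powersetCard {M : Type*} [AddCommMonoid M]
    (f : (ι → Fin 2) → M) (ℓ : ℕ) :
    ∑ σ ∈ univ.filter (fun σ : ι → Fin 2 => #(univ.filter (σ · = 1)) = ℓ), f σ =
      ∑ A ∈ powersetCard ℓ univ, f (twoColoring A) := by
  refine sum_nbij' (fun σ => univ.filter (σ · = 1)) twoColoring ?_ ?_ ?_ ?_ ?_
  · simp
  · simp [filter_twoColoring_eq_one]
  · exact fun σ _ => twoColoring_filter_eq_one σ
  · exact fun A _ => filter_twoColoring_eq_one A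
  · exact fun σ _ => by rw [twoColoring_filter_eq_one]

end TwoColorings

lemma zpow_le_max_zpow_zpow_neg {γ : ℝ} (hγ : 0 < γ) {n k : ℤ} (h : |n| ≤ k) :
    γ ^ n ≤ max (γ ^ k) (γ ^ (-k)) := by
  rcases le_total 1 γ with hγ₁ | hγ₁
  · exact (zpow_le_zpow_right₀ hγ₁ ((le_abs_self n).trans h)).trans (le_max_left _ _)
  · exact (zpow_le_zpow_right_of_le_one₀ hγ hγ₁ (neg_le_of_abs_le h)).trans
      (le_max_right _ _)

namespace SimpleGraph

variable {ι : Type*} [Fintype ι] [DecidableEq ι] (H : SimpleGraph ι) [DecidableRel H.Adj]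
  (γ : ℝ)

/-- The constrained partition function `Z^ℓ`: colour `1` plays the role of `c₂`. -/
noncomputable def twoColoringPartitionFn (ℓ : ℕ) : ℝ :=
  ∑ σ ∈ univ.filter (fun σ : ι → Fin 2 => #(univ.filter (σ · = 1)) = ℓ),
    γ ^ (-(H.bichromaticEdgeCount σ : ℤ))

lemma twoColoringPartitionFn_eq_sum_powersetCard (ℓ : ℕ) :
    H.twoColoringPartitionFn γ ℓ =
      ∑ A ∈ powersetCard ℓ univ, γ ^ (-(H.bichromaticEdgeCount (twoColoring A) : ℤ)) :=
  sum_filter_card_eq_one_eq_sum_powersetCard _ ℓ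

variable {γ}

lemma twoColoringPartitionFn_pos (hγ : 0 < γ) {ℓ : ℕ} (hℓ : ℓ ≤ Fintype.card ι) :
    0 < H.twoColoringPartitionFn γ ℓ := by
  rw [twoColoringPartitionFn_eq_sum_powersetCard]
  exact sum_pos (fun _ _ => zpow_pos hγ _) (powersetCard_nonempty.2 (by simpa using hℓ))

lemma twoColoringPartitionFn_card_sub (ℓ : ℕ) (hℓ : ℓ ≤ Fintype.card ι) :
    H.twoColoringPartitionFn γ (Fintype.card ι - ℓ) = H.twoColoringPartitionFn γ ℓ := by
  simp only [twoColoringPartitionFn_eq_sum_powersetCard]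
  refine sum_nbij' compl compl (fun A hA => ?_) (fun A hA => ?_) (fun A _ => compl_compl A)
    (fun A _ => compl_compl A) fun A _ => ?_
  · simp only [mem_powersetCard, subset_univ, true_and] at hA ⊢
    rw [card_compl, hA]; omega
  · simp only [mem_powersetCard, subset_univ, true_and] at hA ⊢
    rw [card_compl, hA]
  · rw [bichromaticEdgeCount, bichromaticEdgeCount, twoColoring_compl,
      bichromaticPairs_comp _ Fin.rev_injective]

theorem twoColoringPartitionFn_le_max_mul {d : ℕ} (hdeg : ∀ v, H.degree v ≤ d) (hγ : 0 < γ)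
    {ℓ m : ℕ} (hmℓ : m ≤ ℓ) (hℓ : Fintype.card ι ≤ ℓ + m) :
    H.twoColoringPartitionFn γ ℓ ≤
      max (γ ^ (d * ((ℓ : ℤ) - m))) (γ ^ (-(d * ((ℓ : ℤ) - m)))) *
        H.twoColoringPartitionFn γ m := by
  simp only [twoColoringPartitionFn_eq_sum_powersetCard]
  refine sum_powersetCard_le_mul_sum_powersetCard (fun _ => (zpow_pos hγ _).le)
    ((zpow_pos hγ _).le.trans (le_max_left _ _)) hmℓ hℓ fun A B hBA hA hB => ?_
  have hdiff : #(univ.filter fun i => twoColoring A i ≠ twoColoring B i) = ℓ - m := by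
    rw [filter_twoColoring_ne, symmDiff_of_ge hBA, card_sdiff_of_subset hBA, hA, hB]
  have hA_le := H.bichromaticEdgeCount_le hdeg (twoColoring A) (twoColoring B)
  have hB_le := H.bichromaticEdgeCount_le hdeg (twoColoring B) (twoColoring A)
  simp only [ne_comm (a := twoColoring B _)] at hB_le
  rw [hdiff] at hA_le hB_le
  set eA := H.bichromaticEdgeCount (twoColoring A)
  set eB := H.bichromaticEdgeCount (twoColoring B)
  zify [hmℓ] at hA_le hB_le
  calc γ ^ (-(eA : ℤ)) = γ ^ ((eB : ℤ) - eA) * γ ^ (-(eB : ℤ)) := by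
        rw [← zpow_add₀ hγ.ne']; ring_nf
    _ ≤ _ := by
        gcongr
        exact zpow_le_max_zpow_zpow_neg hγ (abs_sub_le_iff.2 ⟨by linarith, by linarith⟩)

end SimpleGraph

/-- Ratio bound on the constrained partition functions `Z_Λ^ℓ` in a graph of
maximum degree 6: with `Z_Λ^ℓ = ∑_σ γ^{−h(σ)}` over 2-colorings of `Λ` with
exactly `ℓ` vertices of color `c₂` and `h(σ)` the number of bichromatic edges
within `Λ`, one has
`Z_Λ^ℓ / Z_Λ^{|Λ|/2} ≤ max{γ^{6(ℓ−|Λ|/2)}, γ^{−6(ℓ−|Λ|/2)}}`. -/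
theorem stmt_12 (V : Type) [DecidableEq V] (G : SimpleGraph V)
    [DecidableRel G.Adj] [G.LocallyFinite] (hdeg : ∀ v : V, G.degree v ≤ 6)
    (Λ : Finset V) (hΛ : Even Λ.card) (γ : ℝ) (hγ : 0 < γ)
    (ℓ : ℕ) (hℓ : ℓ ≤ Λ.card)
    (h : (↥Λ → Fin 2) → ℕ)
    (hh : ∀ σ : ↥Λ → Fin 2, h σ =
      ((Finset.univ : Finset (↥Λ × ↥Λ)).filter
        (fun p => G.Adj p.1.val p.2.val ∧ σ p.1 ≠ σ p.2)).card / 2)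
    (Z : ℕ → ℝ)
    (hZ : ∀ m : ℕ, Z m =
      ∑ σ ∈ (Finset.univ : Finset (↥Λ → Fin 2)).filter
          (fun σ => (Finset.univ.filter (fun i => σ i = 1)).card = m),
        γ ^ (-(h σ : ℤ))) :
    Z ℓ / Z (Λ.card / 2) ≤
      max (γ ^ (6 * ((ℓ : ℤ) - Λ.card / 2)))
        (γ ^ (-(6 * ((ℓ : ℤ) - Λ.card / 2)))) := by
  let H := G.comap (Function.Embedding.subtype (· ∈ Λ))
  have hdegH (v : Λ) : H.degree v ≤ 6 :=
    ((SimpleGraph.Embedding.comap _ G).toCopy.degree_le v).trans (hdeg v)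
  obtain rfl : h = H.bichromaticEdgeCount := funext hh
  obtain rfl : Z = H.twoColoringPartitionFn γ := funext hZ
  obtain ⟨m, hm⟩ := hΛ
  have hcard : Fintype.card Λ = m + m := by rw [Fintype.card_coe, hm]
  rw [show Λ.card / 2 = m by omega, show (Λ.card : ℤ) / 2 = m by omega,
    div_le_iff₀ (H.twoColoringPartitionFn_pos hγ (by omega))]
  rcases le_total m ℓ with hmℓ | hℓm
  · exact H.twoColoringPartitionFn_le_max_mul hdegH hγ hmℓ (by omega)
  · rw [← H.twoColoringPartitionFn_card_sub ℓ (by omega), max_comm]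
    have key := H.twoColoringPartitionFn_le_max_mul hdegH hγ
      (ℓ := Fintype.card Λ - ℓ) (m := m) (by omega) (by omega)
    rwa [show ((6 : ℕ) : ℤ) * (((Fintype.card Λ - ℓ : ℕ) : ℤ) - m) = -(6 * ((ℓ : ℤ) - m))
      by omega, neg_neg] at key
end
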